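/- Let L be a number field and let w be a real number. Then the infimum over β ∈ O_L of Σ_σ |w − σ(β)|² (the sum over all field embeddings σ : L → ℂ) equals [L:ℚ]·min_{m∈ℤ} (w − m)², and this infimum is attained at every integer m ∈ ℤ ⊆ O_L nearest to w. -/

import Mathlib

/-!
Write `β = m + γ` with `m` an integer nearest to `w` and `γ ∈ 𝓞_L`, and put `d = w - m`, so that
`|d| ≤ 1/2` and `Σ_σ |w - σ β|² = n d² - 2 d T + S` with `T = Σ_σ Re σ γ` and `S = Σ_σ |σ γ|²`.
If `γ ≠ 0`, the product of the `|σ γ|²` is `|N γ|² ≥ 1`, so AM-GM gives `S ≥ n`; Cauchy-Schwarz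
then gives `T² ≤ n S ≤ S²`, hence `2 d T ≤ |T| ≤ S` and the sum is at least `n d²`.
-/

open NumberField Finset

lemma card_le_sum_of_one_le_prod {ι : Type*} [Fintype ι] (a : ι → ℝ) (ha : ∀ i, 0 ≤ a i)
    (h : 1 ≤ ∏ i, a i) : (Fintype.card ι : ℝ) ≤ ∑ i, a i := by
  have hpos : ∀ i, 0 < a i := fun i => (ha i).lt_of_ne fun hi => by
    rw [prod_eq_zero (mem_univ i) hi.symm] at h
    exact zero_lt_one.not_ge h
  have hlog : 0 ≤ ∑ i, Real.log (a i) := by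
    rw [← Real.log_prod fun i _ => (hpos i).ne']
    exact Real.log_nonneg h
  have hsub : ∑ i, Real.log (a i) ≤ ∑ i, (a i - 1) :=
    sum_le_sum fun i _ => Real.log_le_sub_one_of_pos (hpos i)
  rw [sum_sub_distrib, sum_const, card_univ, nsmul_one] at hsub
  linarith

lemma abs_sum_re_le_sum_norm_sq {ι : Type*} [Fintype ι] (z : ι → ℂ)
    (hz : (Fintype.card ι : ℝ) ≤ ∑ i, ‖z i‖ ^ 2) :
    |∑ i, (z i).re| ≤ ∑ i, ‖z i‖ ^ 2 := by
  have hS : 0 ≤ ∑ i, ‖z i‖ ^ 2 := by positivity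
  refine abs_le_of_sq_le_sq ?_ hS
  calc (∑ i, (z i).re) ^ 2 ≤ Fintype.card ι * ∑ i, (z i).re ^ 2 := by
        simpa using sq_sum_le_card_mul_sum_sq (s := univ) (f := fun i => (z i).re)
    _ ≤ Fintype.card ι * ∑ i, ‖z i‖ ^ 2 := by
        refine mul_le_mul_of_nonneg_left (sum_le_sum fun i _ => ?_) (Nat.cast_nonneg _)
        exact sq_le_sq.mpr ((Complex.abs_re_le_norm _).trans (le_abs_self _))
    _ ≤ (∑ i, ‖z i‖ ^ 2) ^ 2 := by rw [sq]; gcongr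

lemma card_mul_sq_le_sum_norm_sub_sq {ι : Type*} [Fintype ι] (z : ι → ℂ)
    (hz : (Fintype.card ι : ℝ) ≤ ∑ i, ‖z i‖ ^ 2) {d : ℝ} (hd : |d| ≤ 1 / 2) :
    Fintype.card ι * d ^ 2 ≤ ∑ i, ‖(d : ℂ) - z i‖ ^ 2 := by
  have hexpand : ∑ i, ‖(d : ℂ) - z i‖ ^ 2
      = Fintype.card ι * d ^ 2 - 2 * d * ∑ i, (z i).re + ∑ i, ‖z i‖ ^ 2 := by
    have hterm : ∀ i, ‖(d : ℂ) - z i‖ ^ 2 = d ^ 2 - 2 * d * (z i).re + ‖z i‖ ^ 2 := fun i => by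
      simp only [Complex.sq_norm, Complex.normSq_apply, Complex.sub_re, Complex.sub_im,
        Complex.ofReal_re, Complex.ofReal_im]
      ring
    rw [sum_congr rfl fun i _ => hterm i, sum_add_distrib, sum_sub_distrib, sum_const, card_univ,
      nsmul_eq_mul, mul_sum]
  have hT := abs_sum_re_le_sum_norm_sq z hz
  have hdT : 2 * d * ∑ i, (z i).re ≤ |∑ i, (z i).re| := by
    calc 2 * d * ∑ i, (z i).re ≤ |2 * d * ∑ i, (z i).re| := le_abs_self _
      _ = 2 * |d| * |∑ i, (z i).re| := by rw [abs_mul, abs_mul, abs_two]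
      _ ≤ |∑ i, (z i).re| := by nlinarith [abs_nonneg (∑ i, (z i).re)]
  linarith

section NumberField

variable {L : Type*} [Field L] [NumberField L]

lemma prod_norm_embeddings_eq_abs_norm (x : L) :
    ∏ σ : L →+* ℂ, ‖σ x‖ = |(Algebra.norm ℚ x : ℝ)| := by
  rw [Fintype.prod_equiv (RingHom.equivRatAlgHom L ℂ) (fun σ => ‖σ x‖) (fun τ => ‖τ x‖)
      fun _ => by simp [RingHom.equivRatAlgHom_apply], ← norm_prod,
    ← Algebra.norm_eq_prod_embeddings, eq_ratCast, Complex.norm_ratCast]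

lemma one_le_prod_norm_embeddings {α : 𝓞 L} (hα : α ≠ 0) : 1 ≤ ∏ σ : L →+* ℂ, ‖σ α‖ := by
  rw [prod_norm_embeddings_eq_abs_norm, ← Algebra.coe_norm_int, Rat.cast_intCast]
  exact_mod_cast Int.one_le_abs (Algebra.norm_ne_zero_iff.mpr hα)

lemma card_le_sum_norm_sq_embeddings {α : 𝓞 L} (hα : α ≠ 0) :
    (Fintype.card (L →+* ℂ) : ℝ) ≤ ∑ σ : L →+* ℂ, ‖σ α‖ ^ 2 :=
  card_le_sum_of_one_le_prod _ (fun _ => by positivity)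
    (by rw [prod_pow]; exact one_le_pow₀ (one_le_prod_norm_embeddings hα))

lemma sum_norm_sub_embeddings_intCast_sq (w : ℝ) (m : ℤ) :
    ∑ σ : L →+* ℂ, ‖(w : ℂ) - σ ((m : 𝓞 L) : L)‖ ^ 2 = Module.finrank ℚ L * (w - m) ^ 2 := by
  have hterm : ∀ σ : L →+* ℂ, ‖(w : ℂ) - σ ((m : 𝓞 L) : L)‖ ^ 2 = (w - m) ^ 2 := fun σ => by
    rw [show ((m : 𝓞 L) : L) = m by simp, map_intCast, ← Complex.ofReal_intCast, ← Complex.ofReal_sub,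
      Complex.norm_real, Real.norm_eq_abs, sq_abs]
  rw [sum_congr rfl fun σ _ => hterm σ, sum_const, card_univ, NumberField.Embeddings.card,
    nsmul_eq_mul]

lemma finrank_mul_sq_le_sum_norm_sub_embeddings_sq {w : ℝ} {m : ℤ} (hm : |w - m| ≤ 1 / 2)
    (β : 𝓞 L) :
    Module.finrank ℚ L * (w - m) ^ 2 ≤ ∑ σ : L →+* ℂ, ‖(w : ℂ) - σ β‖ ^ 2 := by
  rcases eq_or_ne β m with rfl | hβ
  · exact (sum_norm_sub_embeddings_intCast_sq w m).ge
  have hshift : ∀ σ : L →+* ℂ,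
      (w : ℂ) - σ β = ((w - m : ℝ) : ℂ) - σ ((β - m : 𝓞 L) : L) := fun σ => by
    simp
  simp_rw [hshift, ← NumberField.Embeddings.card L ℂ]
  exact card_mul_sq_le_sum_norm_sub_sq _ (card_le_sum_norm_sq_embeddings (sub_ne_zero.mpr hβ)) hm

end NumberField

lemma iInf_sq_sub_intCast_eq {w : ℝ} {m : ℤ} (hm : ∀ m' : ℤ, |w - m| ≤ |w - m'|) :
    ⨅ m' : ℤ, (w - m') ^ 2 = (w - m) ^ 2 :=
  le_antisymm (ciInf_le ⟨0, by rintro _ ⟨m', rfl⟩; positivity⟩ m)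
    (le_ciInf fun m' => sq_le_sq.mpr (hm m'))

/-- Rank-one case of Proposition 5.5: for a real number `w`, the infimum over `β ∈ 𝓞_L` of
`Σ_σ |w − σ(β)|²` is attained and equals `[L:ℚ] · min_{m ∈ ℤ} (w − m)²`; moreover it is
attained at every integer `m` nearest to `w`. -/
theorem statement3 (L : Type*) [Field L] [NumberField L] (w : ℝ) :
    IsLeast {x : ℝ | ∃ β : 𝓞 L, x = ∑ σ : L →+* ℂ, ‖(w : ℂ) - σ (β : L)‖ ^ 2}
        ((Module.finrank ℚ L : ℝ) * ⨅ m : ℤ, (w - (m : ℝ)) ^ 2) ∧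
      ∀ m : ℤ, (∀ m' : ℤ, |w - (m : ℝ)| ≤ |w - (m' : ℝ)|) →
        (∑ σ : L →+* ℂ, ‖(w : ℂ) - σ (((m : 𝓞 L)) : L)‖ ^ 2) =
          (Module.finrank ℚ L : ℝ) * ⨅ m' : ℤ, (w - (m' : ℝ)) ^ 2 := by
  refine ⟨⟨⟨round w, ?_⟩, ?_⟩, fun m hm => ?_⟩
  · rw [sum_norm_sub_embeddings_intCast_sq, iInf_sq_sub_intCast_eq (round_le w)]
  · rintro _ ⟨β, rfl⟩
    rw [iInf_sq_sub_intCast_eq (round_le w)]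
    exact finrank_mul_sq_le_sum_norm_sub_embeddings_sq (abs_sub_round w) β
  · rw [sum_norm_sub_embeddings_intCast_sq, iInf_sq_sub_intCast_eq hm]
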